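/- arXiv:1508.06465 — 4 statements merged into one kernel-verified Lean document; each statement's English description precedes it below -/
import Mathlib

section
/- For two probability measures μ and ν on the real line with finite second moments and quantile functions F^{-1} and G^{-1}, the squared 2-Wasserstein distance satisfies W₂²(μ,ν) = ∫₀¹ (F^{-1}(t) - G^{-1}(t))² dt. -/
open MeasureTheory

noncomputable section

/-- Squared 2-Wasserstein distance on ℝ: infimum over couplings of ∫ (x-y)² dπ. -/
def W2sq (μ ν : Measure ℝ) : ℝ :=
  sInf { c | ∃ π : Measure (ℝ × ℝ), IsProbabilityMeasure π ∧
    π.map Prod.fst = μ ∧ π.map Prod.snd = ν ∧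
    c = ∫ p, (p.1 - p.2) ^ 2 ∂π }

/-- Quantile function: F⁻¹(t) = inf {x : F(x) ≥ t}. -/
def quantile (μ : Measure ℝ) (t : ℝ) : ℝ :=
  sInf { x | ENNReal.ofReal t ≤ μ (Set.Iic x) }

/-!
Write `x = ∫ (𝟙[s < x] - 𝟙[s < 0]) ds`. For a coupling `π` of `μ` and `ν` with finite second
moments, Fubini gives Hoeffding's formula
`∫ x y dπ = ∫∫ π(X > s, Y > u) ds du + (terms depending only on μ and ν)`,
and `π(X > s, Y > u) ≤ min (μ (Ioi s)) (ν (Ioi u))`, with equality for the comonotone coupling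
`t ↦ (F⁻¹ t, G⁻¹ t)` of the uniform law on `(0, 1)`. Hence this coupling maximises `∫ x y dπ`,
i.e. minimises `∫ (x - y)² dπ = ∫ x² dμ + ∫ y² dν - 2 ∫ x y dπ`.
-/

open Set Filter Topology ProbabilityTheory

local notation "𝕌" => volume.restrict (Ioo (0 : ℝ) 1)

instance : IsProbabilityMeasure 𝕌 :=
  ⟨by rw [Measure.restrict_apply_univ, Real.volume_Ioo, sub_zero, ENNReal.ofReal_one]⟩

section Quantile

variable {μ : Measure ℝ} [IsProbabilityMeasure μ] {t : ℝ}

lemma quantile_eq_sInf_cdf : quantile μ t = sInf {x | t ≤ cdf μ x} := by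
  simp only [quantile, ← ofReal_cdf, ENNReal.ofReal_le_ofReal_iff (cdf_nonneg μ _)]

lemma quantile_le_iff (ht : t ∈ Ioo 0 1) {x : ℝ} : quantile μ t ≤ x ↔ t ≤ cdf μ x := by
  rw [quantile_eq_sInf_cdf]
  set S := {x | t ≤ cdf μ x}
  have hS : S.Nonempty :=
    ((tendsto_cdf_atTop μ).eventually (eventually_gt_nhds ht.2)).exists.imp fun _ ↦ le_of_lt
  have hS' : BddBelow S := by
    obtain ⟨a, ha⟩ :=
      eventually_atBot.1 ((tendsto_cdf_atBot μ).eventually (eventually_lt_nhds ht.1))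
    exact ⟨a, fun y hy ↦ le_of_not_ge fun hya ↦ (ha y hya).not_ge hy⟩
  refine ⟨fun h ↦ ?_, fun h ↦ csInf_le hS' h⟩
  -- right-continuity of the cdf puts the infimum itself in `S`
  have hmem : t ≤ cdf μ (sInf S) := by
    refine ge_of_tendsto (((cdf μ).right_continuous _).mono Ioi_subset_Ici_self)
      (eventually_nhdsWithin_of_forall fun y hy ↦ ?_)
    obtain ⟨z, hz, hzy⟩ := exists_lt_of_csInf_lt hS hy
    exact hz.trans (monotone_cdf μ hzy.le)
  exact hmem.trans (monotone_cdf μ h)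

lemma lt_quantile_iff (ht : t ∈ Ioo 0 1) {x : ℝ} : x < quantile μ t ↔ cdf μ x < t := by
  simpa only [not_le] using (quantile_le_iff ht).not

lemma monotoneOn_quantile : MonotoneOn (quantile μ) (Ioo 0 1) := fun _ hs _ ht hst ↦
  (quantile_le_iff hs).2 (hst.trans ((quantile_le_iff ht).1 le_rfl))

lemma aemeasurable_quantile : AEMeasurable (quantile μ) 𝕌 :=
  aemeasurable_restrict_of_monotoneOn measurableSet_Ioo monotoneOn_quantile

lemma preimage_quantile_Ioi_inter (x : ℝ) :
    quantile μ ⁻¹' Ioi x ∩ Ioo 0 1 = Ioo (cdf μ x) 1 := by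
  ext t
  refine ⟨fun ⟨hx, ht⟩ ↦ ⟨(lt_quantile_iff ht).1 hx, ht.2⟩, fun ht ↦ ?_⟩
  have ht' : t ∈ Ioo 0 1 := ⟨(cdf_nonneg μ x).trans_lt ht.1, ht.2⟩
  exact ⟨(lt_quantile_iff ht').2 ht.1, ht'⟩

lemma preimage_quantile_Iic_inter (x : ℝ) :
    quantile μ ⁻¹' Iic x ∩ Ioo 0 1 = Ioo 0 1 ∩ Iic (cdf μ x) := by
  ext t
  exact ⟨fun ⟨hx, ht⟩ ↦ ⟨ht, (quantile_le_iff ht).1 hx⟩,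
    fun ⟨ht, hx⟩ ↦ ⟨(quantile_le_iff ht).2 hx, ht⟩⟩

lemma map_quantile : (𝕌).map (quantile μ) = μ := by
  refine Measure.ext_of_Iic _ _ fun x ↦ ?_
  rw [Measure.map_apply_of_aemeasurable aemeasurable_quantile measurableSet_Iic,
    Measure.restrict_apply₀' measurableSet_Ioo.nullMeasurableSet, preimage_quantile_Iic_inter,
    ← ofReal_cdf]
  refine le_antisymm ?_ ?_
  · calc volume (Ioo 0 1 ∩ Iic (cdf μ x)) ≤ volume (Ioc 0 (cdf μ x)) :=
          measure_mono fun t ht ↦ ⟨ht.1.1, ht.2⟩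
      _ = _ := by rw [Real.volume_Ioc, sub_zero]
  · calc ENNReal.ofReal (cdf μ x) = volume (Ioo 0 (cdf μ x)) := by rw [Real.volume_Ioo, sub_zero]
      _ ≤ volume (Ioo 0 1 ∩ Iic (cdf μ x)) :=
          measure_mono fun t ht ↦ ⟨⟨ht.1, ht.2.trans_le (cdf_le_one μ x)⟩, ht.2.le⟩

lemma measure_Ioi_eq_ofReal_one_sub_cdf (x : ℝ) : μ (Ioi x) = ENNReal.ofReal (1 - cdf μ x) := by
  rw [← compl_Iic, prob_compl_eq_one_sub measurableSet_Iic, ← ofReal_cdf,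
    ENNReal.ofReal_sub _ (cdf_nonneg μ x), ENNReal.ofReal_one]

end Quantile

section QuantileCoupling

variable (μ ν : Measure ℝ) [IsProbabilityMeasure μ] [IsProbabilityMeasure ν]

def quantileCoupling : Measure (ℝ × ℝ) := (𝕌).map fun t ↦ (quantile μ t, quantile ν t)

lemma aemeasurable_quantile_prodMk : AEMeasurable (fun t ↦ (quantile μ t, quantile ν t)) 𝕌 :=
  aemeasurable_quantile.prodMk aemeasurable_quantile

instance : IsProbabilityMeasure (quantileCoupling μ ν) :=
  Measure.isProbabilityMeasure_map (aemeasurable_quantile_prodMk μ ν)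

lemma map_fst_quantileCoupling : (quantileCoupling μ ν).map Prod.fst = μ := by
  rw [quantileCoupling, AEMeasurable.map_map_of_aemeasurable measurable_fst.aemeasurable
    (aemeasurable_quantile_prodMk μ ν)]
  exact map_quantile

lemma map_snd_quantileCoupling : (quantileCoupling μ ν).map Prod.snd = ν := by
  rw [quantileCoupling, AEMeasurable.map_map_of_aemeasurable measurable_snd.aemeasurable
    (aemeasurable_quantile_prodMk μ ν)]
  exact map_quantile

lemma quantileCoupling_Ioi_prod_Ioi (s u : ℝ) :
    quantileCoupling μ ν (Ioi s ×ˢ Ioi u) = min (μ (Ioi s)) (ν (Ioi u)) := by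
  rw [quantileCoupling, Measure.map_apply_of_aemeasurable (aemeasurable_quantile_prodMk μ ν)
      (measurableSet_Ioi.prod measurableSet_Ioi),
    Measure.restrict_apply₀' measurableSet_Ioo.nullMeasurableSet, mk_preimage_prod,
    inter_inter_distrib_right, preimage_quantile_Ioi_inter, preimage_quantile_Ioi_inter,
    Ioo_inter_Ioo, inf_idem, Real.volume_Ioo, measure_Ioi_eq_ofReal_one_sub_cdf,
    measure_Ioi_eq_ofReal_one_sub_cdf, ← ENNReal.ofReal_min, min_sub_sub_left]

lemma integral_sq_sub_quantileCoupling :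
    ∫ p, (p.1 - p.2) ^ 2 ∂quantileCoupling μ ν =
      ∫ t in Ioo 0 1, (quantile μ t - quantile ν t) ^ 2 :=
  integral_map (aemeasurable_quantile_prodMk μ ν) (by fun_prop)

end QuantileCoupling

section SignedStep

def signedStep (x s : ℝ) : ℝ := (Ioi s).indicator 1 x - (Iio 0).indicator 1 s

lemma signedStep_eq (x s : ℝ) :
    signedStep x s = (Ico 0 x).indicator 1 s - (Ico x 0).indicator 1 s := by
  simp only [signedStep, indicator, mem_Ioi, mem_Iio, mem_Ico, Pi.one_apply]
  split_ifs <;> grind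

lemma abs_signedStep (x s : ℝ) :
    |signedStep x s| = (Ico 0 x).indicator 1 s + (Ico x 0).indicator 1 s := by
  rw [signedStep_eq]
  simp only [indicator, mem_Ico, Pi.one_apply]
  split_ifs <;> grind

lemma integrable_indicator_Ico_one (a b : ℝ) : Integrable ((Ico a b).indicator (1 : ℝ → ℝ)) :=
  (integrable_indicator_iff measurableSet_Ico).2 (integrableOn_const measure_Ico_lt_top.ne)

lemma integrable_signedStep (x : ℝ) : Integrable (signedStep x) := by
  rw [show signedStep x = _ from funext (signedStep_eq x)]
  exact (integrable_indicator_Ico_one 0 x).sub (integrable_indicator_Ico_one x 0)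

lemma integral_signedStep (x : ℝ) : ∫ s, signedStep x s = x := by
  simp only [signedStep_eq]
  rw [integral_sub (integrable_indicator_Ico_one 0 x) (integrable_indicator_Ico_one x 0),
    integral_indicator_one measurableSet_Ico, integral_indicator_one measurableSet_Ico,
    Real.volume_real_Ico, Real.volume_real_Ico, sub_zero, zero_sub, max_zero_sub_eq_self]

lemma integral_abs_signedStep (x : ℝ) : ∫ s, |signedStep x s| = |x| := by
  simp only [abs_signedStep]
  rw [integral_add (integrable_indicator_Ico_one 0 x) (integrable_indicator_Ico_one x 0),
    integral_indicator_one measurableSet_Ico, integral_indicator_one measurableSet_Ico,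
    Real.volume_real_Ico, Real.volume_real_Ico, sub_zero, zero_sub,
    max_zero_add_max_neg_zero_eq_abs_self]

lemma measurable_signedStep : Measurable (Function.uncurry signedStep) :=
  (measurable_const.indicator (measurableSet_lt measurable_snd measurable_fst)).sub
    ((measurable_const.indicator measurableSet_Iio).comp measurable_snd)

end SignedStep

section Coupling

variable {μ ν : Measure ℝ} {π : Measure (ℝ × ℝ)} {E : Type*} [NormedAddCommGroup E]

lemma measure_prod_le_min (hπμ : π.map Prod.fst = μ) (hπν : π.map Prod.snd = ν)
    {A B : Set ℝ} (hA : MeasurableSet A) (hB : MeasurableSet B) :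
    π (A ×ˢ B) ≤ min (μ A) (ν B) := by
  rw [← hπμ, ← hπν, Measure.map_apply measurable_fst hA, Measure.map_apply measurable_snd hB]
  exact le_min (measure_mono (prod_subset_preimage_fst A B))
    (measure_mono (prod_subset_preimage_snd A B))

lemma integral_comp_fst [NormedSpace ℝ E] (hπμ : π.map Prod.fst = μ) {f : ℝ → E}
    (hf : AEStronglyMeasurable f μ) :
    ∫ p, f p.1 ∂π = ∫ x, f x ∂μ := by
  subst hπμ
  exact (integral_map measurable_fst.aemeasurable hf).symm

lemma integral_comp_snd [NormedSpace ℝ E] (hπν : π.map Prod.snd = ν) {f : ℝ → E}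
    (hf : AEStronglyMeasurable f ν) :
    ∫ p, f p.2 ∂π = ∫ x, f x ∂ν := by
  subst hπν
  exact (integral_map measurable_snd.aemeasurable hf).symm

lemma integrable_comp_fst (hπμ : π.map Prod.fst = μ) {f : ℝ → E} (hf : Integrable f μ) :
    Integrable (fun p ↦ f p.1) π := by
  subst hπμ
  exact hf.comp_measurable measurable_fst

lemma integrable_comp_snd (hπν : π.map Prod.snd = ν) {f : ℝ → E} (hf : Integrable f ν) :
    Integrable (fun p ↦ f p.2) π := by
  subst hπν
  exact hf.comp_measurable measurable_snd

lemma integral_indicator_sub_mul_indicator_sub [IsProbabilityMeasure π]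
    (hπμ : π.map Prod.fst = μ) (hπν : π.map Prod.snd = ν)
    {A B : Set ℝ} (hA : MeasurableSet A) (hB : MeasurableSet B) (a b : ℝ) :
    ∫ p, (A.indicator 1 p.1 - a) * (B.indicator 1 p.2 - b) ∂π =
      π.real (A ×ˢ B) - b * μ.real A - a * ν.real B + a * b := by
  have hAB : Integrable (fun p ↦ (A ×ˢ B).indicator (1 : ℝ × ℝ → ℝ) p) π :=
    (integrable_indicator_iff (hA.prod hB)).2 (integrable_const _)
  have hA' : Integrable (fun p : ℝ × ℝ ↦ A.indicator (1 : ℝ → ℝ) p.1) π :=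
    (integrable_indicator_iff (measurable_fst hA)).2 (integrable_const _)
  have hB' : Integrable (fun p : ℝ × ℝ ↦ B.indicator (1 : ℝ → ℝ) p.2) π :=
    (integrable_indicator_iff (measurable_snd hB)).2 (integrable_const _)
  have hexpand : ∀ p : ℝ × ℝ, (A.indicator 1 p.1 - a) * (B.indicator 1 p.2 - b) =
      (A ×ˢ B).indicator 1 p - b * A.indicator 1 p.1 - a * B.indicator 1 p.2 + a * b := by
    rintro ⟨x, y⟩
    rw [indicator_prod_one]
    ring
  simp only [hexpand]
  rw [integral_add ?_ (integrable_const _), integral_sub ?_ (hB'.const_mul a),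
    integral_sub hAB (hA'.const_mul b), integral_indicator_one (hA.prod hB),
    integral_const_mul, integral_const_mul,
    integral_comp_fst hπμ (stronglyMeasurable_one.indicator hA).aestronglyMeasurable,
    integral_comp_snd hπν (stronglyMeasurable_one.indicator hB).aestronglyMeasurable,
    integral_indicator_one hA, integral_indicator_one hB, integral_const, probReal_univ, one_smul]
  · exact hAB.sub (hA'.const_mul b)
  · exact (hAB.sub (hA'.const_mul b)).sub (hB'.const_mul a)

lemma integrable_fst_mul_snd (hπμ : π.map Prod.fst = μ) (hπν : π.map Prod.snd = ν)
    (hμ : Integrable (fun x ↦ x ^ 2) μ) (hν : Integrable (fun x ↦ x ^ 2) ν) :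
    Integrable (fun p : ℝ × ℝ ↦ p.1 * p.2) π := by
  refine (((integrable_comp_fst hπμ hμ).add (integrable_comp_snd hπν hν)).div_const 2).mono'
    (by fun_prop) (Eventually.of_forall fun p ↦ ?_)
  rw [Real.norm_eq_abs, abs_mul, Pi.add_apply]
  nlinarith [two_mul_le_add_sq |p.1| |p.2|, sq_abs p.1, sq_abs p.2]

lemma integral_sq_sub_eq (hπμ : π.map Prod.fst = μ) (hπν : π.map Prod.snd = ν)
    (hμ : Integrable (fun x ↦ x ^ 2) μ) (hν : Integrable (fun x ↦ x ^ 2) ν) :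
    ∫ p, (p.1 - p.2) ^ 2 ∂π = ∫ x, x ^ 2 ∂μ + ∫ x, x ^ 2 ∂ν - 2 * ∫ p, p.1 * p.2 ∂π := by
  have hμ' := integrable_comp_fst hπμ hμ
  have hν' := integrable_comp_snd hπν hν
  have hμν := (integrable_fst_mul_snd hπμ hπν hμ hν).const_mul 2
  rw [← integral_comp_fst hπμ hμ.aestronglyMeasurable,
    ← integral_comp_snd hπν hν.aestronglyMeasurable, ← integral_const_mul,
    ← integral_add hμ' hν', ← integral_sub ?_ hμν]
  · congr 1 with p
    ring
  · exact hμ'.add hν'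

lemma integrable_signedStep_mul_signedStep [SFinite π]
    (hπμ : π.map Prod.fst = μ) (hπν : π.map Prod.snd = ν)
    (hμ : Integrable (fun x ↦ x ^ 2) μ) (hν : Integrable (fun x ↦ x ^ 2) ν) :
    Integrable (fun z : (ℝ × ℝ) × (ℝ × ℝ) ↦ signedStep z.1.1 z.2.1 * signedStep z.1.2 z.2.2)
      (π.prod volume) := by
  have hmeas : Measurable
      fun z : (ℝ × ℝ) × (ℝ × ℝ) ↦ signedStep z.1.1 z.2.1 * signedStep z.1.2 z.2.2 :=
    (measurable_signedStep.comp (measurable_fst.fst.prodMk measurable_snd.fst)).mul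
      (measurable_signedStep.comp (measurable_fst.snd.prodMk measurable_snd.snd))
  refine (integrable_prod_iff hmeas.aestronglyMeasurable).2 ⟨Eventually.of_forall fun p ↦ ?_, ?_⟩
  · rw [Measure.volume_eq_prod]
    exact (integrable_signedStep p.1).mul_prod (integrable_signedStep p.2)
  · have hnorm (p : ℝ × ℝ) :
        ∫ q : ℝ × ℝ, ‖signedStep p.1 q.1 * signedStep p.2 q.2‖ = |p.1 * p.2| := by
      simp only [Real.norm_eq_abs, abs_mul]
      rw [Measure.volume_eq_prod, integral_prod_mul (fun s ↦ |signedStep p.1 s|)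
        (fun s ↦ |signedStep p.2 s|), integral_abs_signedStep, integral_abs_signedStep]
    simpa only [hnorm] using (integrable_fst_mul_snd hπμ hπν hμ hν).abs

lemma integral_fst_mul_snd_eq [SFinite π]
    (hπμ : π.map Prod.fst = μ) (hπν : π.map Prod.snd = ν)
    (hμ : Integrable (fun x ↦ x ^ 2) μ) (hν : Integrable (fun x ↦ x ^ 2) ν) :
    ∫ p, p.1 * p.2 ∂π = ∫ q : ℝ × ℝ, ∫ p, signedStep p.1 q.1 * signedStep p.2 q.2 ∂π := by
  have hprod (p : ℝ × ℝ) : ∫ q : ℝ × ℝ, signedStep p.1 q.1 * signedStep p.2 q.2 = p.1 * p.2 := by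
    rw [Measure.volume_eq_prod, integral_prod_mul (signedStep p.1) (signedStep p.2),
      integral_signedStep, integral_signedStep]
  simp only [← hprod]
  exact integral_integral_swap (integrable_signedStep_mul_signedStep hπμ hπν hμ hν)

end Coupling

section Optimality

variable {μ ν : Measure ℝ} [IsProbabilityMeasure μ] [IsProbabilityMeasure ν]
  {π : Measure (ℝ × ℝ)} [IsProbabilityMeasure π]

-- Up to terms fixed by the marginals, the integrand is `π (Ioi s ×ˢ Ioi u)`, which the quantile
-- coupling maximises.
lemma integral_signedStep_mul_signedStep_le
    (hπμ : π.map Prod.fst = μ) (hπν : π.map Prod.snd = ν) (s u : ℝ) :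
    ∫ p, signedStep p.1 s * signedStep p.2 u ∂π ≤
      ∫ p, signedStep p.1 s * signedStep p.2 u ∂quantileCoupling μ ν := by
  simp only [signedStep]
  rw [integral_indicator_sub_mul_indicator_sub hπμ hπν measurableSet_Ioi measurableSet_Ioi,
    integral_indicator_sub_mul_indicator_sub (map_fst_quantileCoupling μ ν)
      (map_snd_quantileCoupling μ ν) measurableSet_Ioi measurableSet_Ioi]
  gcongr
  exact ENNReal.toReal_mono (measure_ne_top _ _) <|
    (measure_prod_le_min hπμ hπν measurableSet_Ioi measurableSet_Ioi).trans_eq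
      (quantileCoupling_Ioi_prod_Ioi μ ν s u).symm

lemma integral_fst_mul_snd_le_quantileCoupling
    (hπμ : π.map Prod.fst = μ) (hπν : π.map Prod.snd = ν)
    (hμ : Integrable (fun x ↦ x ^ 2) μ) (hν : Integrable (fun x ↦ x ^ 2) ν) :
    ∫ p, p.1 * p.2 ∂π ≤ ∫ p, p.1 * p.2 ∂quantileCoupling μ ν := by
  have hπq := map_fst_quantileCoupling μ ν
  have hνq := map_snd_quantileCoupling μ ν
  rw [integral_fst_mul_snd_eq hπμ hπν hμ hν, integral_fst_mul_snd_eq hπq hνq hμ hν]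
  exact integral_mono (integrable_signedStep_mul_signedStep hπμ hπν hμ hν).integral_prod_right
    (integrable_signedStep_mul_signedStep hπq hνq hμ hν).integral_prod_right
    fun q ↦ integral_signedStep_mul_signedStep_le hπμ hπν q.1 q.2

lemma integral_sq_sub_quantileCoupling_le
    (hπμ : π.map Prod.fst = μ) (hπν : π.map Prod.snd = ν)
    (hμ : Integrable (fun x ↦ x ^ 2) μ) (hν : Integrable (fun x ↦ x ^ 2) ν) :
    ∫ p, (p.1 - p.2) ^ 2 ∂quantileCoupling μ ν ≤ ∫ p, (p.1 - p.2) ^ 2 ∂π := by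
  rw [integral_sq_sub_eq hπμ hπν hμ hν, integral_sq_sub_eq (map_fst_quantileCoupling μ ν)
    (map_snd_quantileCoupling μ ν) hμ hν]
  linarith [integral_fst_mul_snd_le_quantileCoupling hπμ hπν hμ hν]

end Optimality

theorem stmt_0 (μ ν : Measure ℝ) [IsProbabilityMeasure μ] [IsProbabilityMeasure ν]
    (hμ : Integrable (fun x => x ^ 2) μ) (hν : Integrable (fun x => x ^ 2) ν) :
    W2sq μ ν = ∫ t in Set.Ioo (0 : ℝ) 1, (quantile μ t - quantile ν t) ^ 2 := by
  rw [← integral_sq_sub_quantileCoupling]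
  refine IsLeast.csInf_eq ⟨⟨quantileCoupling μ ν, inferInstance, map_fst_quantileCoupling μ ν,
    map_snd_quantileCoupling μ ν, rfl⟩, ?_⟩
  rintro _ ⟨π, _, hπμ, hπν, rfl⟩
  exact integral_sq_sub_quantileCoupling_le hπμ hπν hμ hν
end
end

section
/- With Φ as above, Φ is positive definite (hence invertible) unless there exists a nonzero x ∈ ℝ^J such that the functions x_i R_i are all μ-a.s. equal to a common function, i.e. unless all the R_i are pairwise proportional μ-a.s. along some nonzero direction; equivalently, x'Φx = 0 for x ≠ 0 implies x_i R_i = x_j R_j μ-a.s. for all i < j. -/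
/-!
Writing `g i = x i • R i`, the quadratic form of `Φ` is an average of squared `L²` distances:
`x ⬝ᵥ Φ *ᵥ x = J⁻² ∑ i, ∑ j, ∫ (g i - g j)²`.
If it vanishes, every one of these nonnegative terms vanishes, so the `g i` agree almost everywhere.
-/

open MeasureTheory Matrix Finset

theorem Finset.sum_sum_add_sub_two_mul {ι : Type*} [Fintype ι] (c : ι → ι → ℝ) :
    ∑ i, ∑ j, (c i i + c j j - 2 * c i j)
      = 2 * (Fintype.card ι * ∑ i, c i i - ∑ i, ∑ j, c i j) := by
  simp only [sum_add_distrib, sum_sub_distrib, sum_const, card_univ, nsmul_eq_mul, ← mul_sum]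
  ring

theorem Matrix.dotProduct_mulVec_of_diag_of_offDiag {ι : Type*} [Fintype ι]
    (Φ : Matrix ι ι ℝ) (a b : ℝ) (C : ι → ι → ℝ)
    (hoff : ∀ i j, i ≠ j → Φ i j = -a * C i j) (hdiag : ∀ i, Φ i i = b * C i i) (x : ι → ℝ) :
    x ⬝ᵥ Φ *ᵥ x = (a + b) * ∑ i, x i * x i * C i i - a * ∑ i, ∑ j, x i * x j * C i j := by
  classical
  have hΦ : ∀ i j, Φ i j = (if i = j then (a + b) * C i i else 0) - a * C i j := by
    intro i j
    by_cases h : i = j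
    · subst h; rw [hdiag, if_pos rfl]; ring
    · rw [hoff i j h, if_neg h]; ring
  simp only [dotProduct, mulVec, hΦ, mul_sub, sub_mul, sum_sub_distrib,
    ite_mul, zero_mul, sum_ite_eq, mem_univ, if_true, mul_sum]
  congr 1 <;> refine sum_congr rfl fun i _ => ?_
  · ring
  · exact sum_congr rfl fun j _ => by ring

section L2

variable {α : Type*} [MeasurableSpace α] {μ : Measure α}

theorem integral_sub_sq_of_memLp {f g : α → ℝ} (hf : MemLp f 2 μ) (hg : MemLp g 2 μ) :
    ∫ y, (f y - g y) ^ 2 ∂μ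
      = ∫ y, f y * f y ∂μ + ∫ y, g y * g y ∂μ - 2 * ∫ y, f y * g y ∂μ := by
  have hexpand : (fun y => (f y - g y) ^ 2)
      = fun y => (f y * f y + g y * g y) - 2 * (f y * g y) := by
    funext y; ring
  have hff : Integrable (fun y => f y * f y) μ := hf.integrable_mul hf
  have hgg : Integrable (fun y => g y * g y) μ := hg.integrable_mul hg
  have hfg : Integrable (fun y => f y * g y) μ := hf.integrable_mul hg
  have hsq : Integrable (fun y => f y * f y + g y * g y) μ := hff.add hgg
  rw [hexpand, integral_sub hsq (hfg.const_mul 2), integral_add hff hgg, integral_const_mul]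

theorem sum_sum_integral_sub_sq {ι : Type*} [Fintype ι] {g : ι → α → ℝ}
    (hg : ∀ i, MemLp (g i) 2 μ) :
    ∑ i, ∑ j, ∫ y, (g i y - g j y) ^ 2 ∂μ
      = 2 * (Fintype.card ι * ∑ i, ∫ y, g i y * g i y ∂μ
        - ∑ i, ∑ j, ∫ y, g i y * g j y ∂μ) := by
  simp only [integral_sub_sq_of_memLp (hg _) (hg _)]
  exact sum_sum_add_sub_two_mul fun i j => ∫ y, g i y * g j y ∂μ

theorem ae_eq_of_integral_sub_sq_eq_zero {f g : α → ℝ} (hf : MemLp f 2 μ) (hg : MemLp g 2 μ)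
    (h : ∫ y, (f y - g y) ^ 2 ∂μ = 0) : f =ᵐ[μ] g := by
  have hsq : (fun y => (f y - g y) ^ 2) =ᵐ[μ] 0 :=
    (integral_eq_zero_iff_of_nonneg (fun y => sq_nonneg _) (hf.sub hg).integrable_sq).mp h
  filter_upwards [hsq] with y hy
  exact sub_eq_zero.mp (pow_eq_zero_iff two_ne_zero |>.mp hy)

end L2

theorem stmt_6_general {J : ℕ} (μ : Measure ℝ)
    (R : Fin J → ℝ → ℝ) (hR : ∀ i, MemLp (R i) 2 μ)
    (Φ : Matrix (Fin J) (Fin J) ℝ)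
    (hΦoff : ∀ i j, i ≠ j → Φ i j = -(2 / (J : ℝ) ^ 2) * ∫ y, R i y * R j y ∂μ)
    (hΦdiag : ∀ i, Φ i i = (2 * ((J : ℝ) - 1) / (J : ℝ) ^ 2) * ∫ y, (R i y) ^ 2 ∂μ)
    (x : Fin J → ℝ) (hxΦ : x ⬝ᵥ Φ.mulVec x = 0) :
    ∀ i j : Fin J, i < j →
      (fun y => x i * R i y) =ᵐ[μ] (fun y => x j * R j y) := by
  intro i j _
  have hJ : (J : ℝ) ≠ 0 := Nat.cast_ne_zero.mpr i.pos.ne'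
  set g : Fin J → ℝ → ℝ := fun k y => x k * R k y
  have hg : ∀ k, MemLp (g k) 2 μ := fun k => (hR k).const_mul (x k)
  have hgram : ∀ k l, ∫ y, g k y * g l y ∂μ = x k * x l * ∫ y, R k y * R l y ∂μ := by
    intro k l
    rw [← integral_const_mul]
    congr 1; funext y; ring
  have hquad : x ⬝ᵥ Φ *ᵥ x = (∑ k, ∑ l, ∫ y, (g k y - g l y) ^ 2 ∂μ) / (J : ℝ) ^ 2 := by
    simp_rw [sq (R _ _)] at hΦdiag
    rw [dotProduct_mulVec_of_diag_of_offDiag Φ _ _ _ hΦoff hΦdiag, sum_sum_integral_sub_sq hg]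
    simp only [hgram, Fintype.card_fin]
    field_simp
    ring
  have hzero : ∀ k l, ∫ y, (g k y - g l y) ^ 2 ∂μ = 0 := by
    have hnonneg : ∀ k l, 0 ≤ ∫ y, (g k y - g l y) ^ 2 ∂μ :=
      fun k l => integral_nonneg fun y => sq_nonneg _
    have hsum : ∑ k, ∑ l, ∫ y, (g k y - g l y) ^ 2 ∂μ = 0 := by
      rwa [hquad, div_eq_zero_iff, or_iff_left (pow_ne_zero 2 hJ)] at hxΦ
    intro k l
    rw [sum_eq_zero_iff_of_nonneg fun k _ => sum_nonneg fun l _ => hnonneg k l] at hsum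
    exact (sum_eq_zero_iff_of_nonneg fun l _ => hnonneg k l).mp (hsum k (mem_univ k)) l
      (mem_univ l)
  exact ae_eq_of_integral_sub_sq_eq_zero (hg i) (hg j) (hzero i j)

theorem stmt_6 {J : ℕ} (hJ : 0 < J) (μ : Measure ℝ) [IsProbabilityMeasure μ]
    (R : Fin J → ℝ → ℝ) (hR : ∀ i, MemLp (R i) 2 μ)
    (Φ : Matrix (Fin J) (Fin J) ℝ)
    (hΦoff : ∀ i j, i ≠ j → Φ i j = -(2 / (J : ℝ) ^ 2) * ∫ y, R i y * R j y ∂μ)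
    (hΦdiag : ∀ i, Φ i i = (2 * ((J : ℝ) - 1) / (J : ℝ) ^ 2) * ∫ y, (R i y) ^ 2 ∂μ)
    (x : Fin J → ℝ) (hx : x ≠ 0) (hxΦ : x ⬝ᵥ Φ.mulVec x = 0) :
    ∀ i j : Fin J, i < j →
      (fun y => x i * R i y) =ᵐ[μ] (fun y => x j * R j y) :=
  stmt_6_general μ R hR Φ hΦoff hΦdiag x hxΦ
end

section
/- Let X be a real random variable with E[|X|^r] < ∞ for some r > 4, with distribution function F and quantile function F^{-1}. Then √n ∫₀^{1/n} (F^{-1}(t))² dt → 0 as n → ∞. -/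
open MeasureTheory

noncomputable section

lemma quantile_aux_nonempty (μ : Measure ℝ) [IsProbabilityMeasure μ] {t : ℝ} (ht : t < 1) :
    {x : ℝ | ENNReal.ofReal t ≤ μ (Set.Iic x)}.Nonempty := by
  have h1 : ENNReal.ofReal t < 1 := ENNReal.ofReal_lt_one.mpr ht
  have h2 := tendsto_measure_Iic_atTop (μ := μ)
  rw [measure_univ] at h2
  have h3 : ∀ᶠ x : ℝ in Filter.atTop, ENNReal.ofReal t < μ (Set.Iic x) :=
    h2.eventually (eventually_gt_nhds h1)
  obtain ⟨x, hx⟩ := h3.exists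
  exact ⟨x, hx.le⟩

lemma quantile_aux_lb (μ : Measure ℝ) [IsProbabilityMeasure μ] {r t : ℝ} (hr : 0 < r)
    (hmom : Integrable (fun x => |x| ^ r) μ) (ht : 0 < t) :
    ∀ x ∈ {x : ℝ | ENNReal.ofReal t ≤ μ (Set.Iic x)},
      -(((∫ y, |y| ^ r ∂μ) / t) ^ (1 / r)) ≤ x := by
  intro x hx
  set M := ∫ y, |y| ^ r ∂μ with hMdef
  have hM0 : 0 ≤ M := integral_nonneg fun y => Real.rpow_nonneg (abs_nonneg y) r
  rcases le_or_gt 0 x with h0 | h0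
  · have : (0:ℝ) ≤ (M / t) ^ (1 / r) := Real.rpow_nonneg (div_nonneg hM0 ht.le) _
    linarith
  · have hsub : Set.Iic x ⊆ {y : ℝ | |x| ^ r ≤ |y| ^ r} := by
      intro y hy
      have hy' : y ≤ x := hy
      have habs : |x| ≤ |y| := by
        rw [abs_of_neg h0, abs_of_nonpos (le_trans hy' h0.le)]
        linarith
      exact Real.rpow_le_rpow (abs_nonneg x) habs hr.le
    have hmono : μ (Set.Iic x) ≤ μ {y : ℝ | |x| ^ r ≤ |y| ^ r} := measure_mono hsub
    have hmar := mul_meas_ge_le_integral_of_nonneg (μ := μ)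
      (ae_of_all μ fun y => Real.rpow_nonneg (abs_nonneg y) r) hmom (|x| ^ r)
    have hfin : μ {y : ℝ | |x| ^ r ≤ |y| ^ r} ≠ ⊤ := measure_ne_top μ _
    have h1 : t ≤ (μ {y : ℝ | |x| ^ r ≤ |y| ^ r}).toReal := by
      have h := le_trans hx hmono
      exact (ENNReal.ofReal_le_iff_le_toReal hfin).mp h
    have hxr : (0:ℝ) ≤ |x| ^ r := Real.rpow_nonneg (abs_nonneg x) r
    have h2 : |x| ^ r * t ≤ M := by
      calc |x| ^ r * t ≤ |x| ^ r * (μ {y : ℝ | |x| ^ r ≤ |y| ^ r}).toReal :=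
            mul_le_mul_of_nonneg_left h1 hxr
        _ ≤ M := hmar
    have h3 : |x| ^ r ≤ M / t := (le_div_iff₀ ht).mpr h2
    have h4 : |x| ≤ (M / t) ^ (1 / r) := by
      calc |x| = (|x| ^ r) ^ (1 / r) := by
            rw [one_div, Real.rpow_rpow_inv (abs_nonneg x) hr.ne']
        _ ≤ (M / t) ^ (1 / r) := Real.rpow_le_rpow hxr h3 (by positivity)
    linarith [neg_abs_le x]

theorem stmt_14 (μ : Measure ℝ) [IsProbabilityMeasure μ] (r : ℝ) (hr : 4 < r)
    (hmom : Integrable (fun x => |x| ^ r) μ) :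
    Filter.Tendsto
      (fun n : ℕ => Real.sqrt n * ∫ t in Set.Ioo (0 : ℝ) (1 / n), (quantile μ t) ^ 2)
      Filter.atTop (nhds 0) := by
  have hr0 : (0:ℝ) < r := by linarith
  set M := ∫ y, |y| ^ r ∂μ with hM
  have hM0 : 0 ≤ M := integral_nonneg fun y => Real.rpow_nonneg (abs_nonneg y) r
  set q : ℝ := quantile μ (1/2) with hq
  set c : ℝ := (M ^ (1/r)) ^ 2 with hc
  have hc0 : 0 ≤ c := sq_nonneg _
  set p : ℝ := 2 / r with hp
  have hp0 : 0 < p := by positivity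
  have hp1 : p < 1/2 := by
    rw [hp, div_lt_div_iff₀ hr0 (by norm_num : (0:ℝ) < 2)]
    linarith
  -- pointwise bound
  have key : ∀ t : ℝ, 0 < t → t ≤ 1/2 → (quantile μ t) ^ 2 ≤ c * t ^ (-p) + q ^ 2 := by
    intro t ht ht2
    have hlb := quantile_aux_lb μ hr0 hmom ht
    have hne_t : {x : ℝ | ENNReal.ofReal t ≤ μ (Set.Iic x)}.Nonempty :=
      quantile_aux_nonempty μ (lt_of_le_of_lt ht2 (by norm_num))
    have hne_h : {x : ℝ | ENNReal.ofReal (1/2 : ℝ) ≤ μ (Set.Iic x)}.Nonempty :=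
      quantile_aux_nonempty μ (by norm_num)
    have hbdd : BddBelow {x : ℝ | ENNReal.ofReal t ≤ μ (Set.Iic x)} :=
      ⟨-((M / t) ^ (1 / r)), fun x hx => hlb x hx⟩
    have h1 : -((M / t) ^ (1 / r)) ≤ quantile μ t := le_csInf hne_t hlb
    have h2 : quantile μ t ≤ q := by
      apply csInf_le_csInf hbdd hne_h
      intro x hx
      exact le_trans (ENNReal.ofReal_le_ofReal ht2) hx
    set a : ℝ := (M / t) ^ (1 / r) with ha
    have ha0 : 0 ≤ a := Real.rpow_nonneg (div_nonneg hM0 ht.le) _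
    have hsq : (quantile μ t) ^ 2 ≤ a ^ 2 + q ^ 2 := by
      rcases le_or_gt 0 (quantile μ t) with h | h
      · nlinarith
      · nlinarith
    have ha2 : a ^ 2 = c * t ^ (-p) := by
      rw [ha, hc, hp, div_eq_mul_inv, Real.mul_rpow hM0 (inv_nonneg.mpr ht.le),
        mul_pow, Real.inv_rpow ht.le, inv_pow,
        ← Real.rpow_natCast (t ^ (1/r)) 2, ← Real.rpow_mul ht.le,
        Real.rpow_neg ht.le]
      norm_num
      left
      congr 1
      ring
    rw [ha2] at hsq
    exact hsq
  -- bound for each n ≥ 2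
  have hbound : ∀ n : ℕ, 2 ≤ n →
      Real.sqrt n * ∫ t in Set.Ioo (0:ℝ) (1 / n), (quantile μ t) ^ 2 ≤
      Real.sqrt n * (c * (1 / (n:ℝ)) ^ (1 - p) / (1 - p) + q ^ 2 * (1 / n)) := by
    intro n hn
    have hn2 : (2:ℝ) ≤ (n:ℝ) := by exact_mod_cast hn
    have hnpos : (0:ℝ) < n := by linarith
    set b : ℝ := 1 / (n:ℝ) with hb
    have hbpos : 0 < b := by positivity
    have hb2 : b ≤ 1/2 := by
      rw [hb]
      rw [div_le_div_iff₀ hnpos (by norm_num : (0:ℝ) < 2)]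
      linarith
    have hii : IntervalIntegrable (fun t : ℝ => t ^ (-p)) volume 0 b :=
      intervalIntegral.intervalIntegrable_rpow' (by linarith)
    have hiig : IntervalIntegrable (fun t : ℝ => c * t ^ (-p) + q ^ 2) volume 0 b :=
      (hii.const_mul c).add intervalIntegrable_const
    have hig : IntegrableOn (fun t : ℝ => c * t ^ (-p) + q ^ 2) (Set.Ioo 0 b) := by
      have := hiig.1
      exact this.mono_set Set.Ioo_subset_Ioc_self
    have h2 : ∫ t in Set.Ioo (0:ℝ) b, (quantile μ t) ^ 2 ≤
        ∫ t in Set.Ioo (0:ℝ) b, (c * t ^ (-p) + q ^ 2) := by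
      apply integral_mono_of_nonneg
      · exact Filter.Eventually.of_forall fun t => sq_nonneg _
      · exact hig
      · refine (ae_restrict_iff' measurableSet_Ioo).2
          (Filter.Eventually.of_forall fun t ht => ?_)
        exact key t ht.1 (le_trans ht.2.le hb2)
    have h3 : ∫ t in Set.Ioo (0:ℝ) b, (c * t ^ (-p) + q ^ 2) =
        c * b ^ (1 - p) / (1 - p) + q ^ 2 * b := by
      rw [← integral_Ioc_eq_integral_Ioo, ← intervalIntegral.integral_of_le hbpos.le]
      rw [intervalIntegral.integral_add (hii.const_mul c) intervalIntegrable_const,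
        intervalIntegral.integral_const_mul,
        integral_rpow (Or.inl (by linarith : (-1:ℝ) < -p)),
        intervalIntegral.integral_const]
      rw [Real.zero_rpow (by linarith : -p + 1 ≠ 0)]
      have : -p + 1 = 1 - p := by ring
      rw [this]
      simp [smul_eq_mul]
      ring
    rw [h3] at h2
    exact mul_le_mul_of_nonneg_left h2 (Real.sqrt_nonneg _)
  have hnn : ∀ n : ℕ, 0 ≤ Real.sqrt n * ∫ t in Set.Ioo (0:ℝ) (1 / n), (quantile μ t) ^ 2 :=
    fun n => mul_nonneg (Real.sqrt_nonneg _) (integral_nonneg fun t => sq_nonneg _)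
  -- the dominating sequence tends to 0
  have hexp : (0:ℝ) < 1/2 - p := by linarith
  have hA : Filter.Tendsto (fun n : ℕ => ((n:ℝ)) ^ (-(1/2 - p))) Filter.atTop (nhds 0) :=
    (tendsto_rpow_neg_atTop hexp).comp tendsto_natCast_atTop_atTop
  have hB : Filter.Tendsto (fun n : ℕ => ((n:ℝ)) ^ (-(1/2 : ℝ))) Filter.atTop (nhds 0) :=
    (tendsto_rpow_neg_atTop (by norm_num : (0:ℝ) < 1/2)).comp tendsto_natCast_atTop_atTop
  have hlim0 : Filter.Tendsto
      (fun n : ℕ => c / (1 - p) * ((n:ℝ)) ^ (-(1/2 - p)) + q ^ 2 * ((n:ℝ)) ^ (-(1/2 : ℝ)))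
      Filter.atTop (nhds 0) := by
    have := (hA.const_mul (c / (1 - p))).add (hB.const_mul (q ^ 2))
    simpa using this
  have hlim : Filter.Tendsto
      (fun n : ℕ => Real.sqrt n * (c * (1 / (n:ℝ)) ^ (1 - p) / (1 - p) + q ^ 2 * (1 / n)))
      Filter.atTop (nhds 0) := by
    apply hlim0.congr'
    filter_upwards [Filter.eventually_ge_atTop 1] with n hn
    have hnpos : (0:ℝ) < n := by exact_mod_cast hn
    have e1 : ((1:ℝ) / n) ^ (1 - p) = (n:ℝ) ^ (-(1 - p)) := by
      rw [one_div, Real.inv_rpow hnpos.le, ← Real.rpow_neg hnpos.le]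
    have e2 : (1:ℝ) / (n:ℝ) = (n:ℝ) ^ (-(1:ℝ)) := by
      rw [Real.rpow_neg hnpos.le, Real.rpow_one, one_div]
    have e3 : Real.sqrt n = (n:ℝ) ^ ((1:ℝ)/2) := Real.sqrt_eq_rpow _
    rw [e1, e2, e3]
    rw [show -(1/2 - p) = (1:ℝ)/2 + -(1-p) by ring, Real.rpow_add hnpos,
      show -(1/2 : ℝ) = (1:ℝ)/2 + -(1:ℝ) by ring, Real.rpow_add hnpos]
    ring
  exact squeeze_zero' (Filter.Eventually.of_forall hnn)
    (Filter.eventually_atTop.2 ⟨2, hbound⟩) hlim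
end
end

section
/- Let G be a compact metric space, U : G → ℝ continuous with minimizer set Γ, and S : G → ℝ continuous. Suppose V_n : G → ℝ satisfy ‖V_n − S‖_∞ → 0 and φ_n ∈ Γ_n (with Γ_n = {φ : U(φ) ≤ inf_G U + δ_n}, δ_n → 0) satisfy V_n(φ_n) ≤ inf_{Γ_n} V_n + 1/n. Then every subsequential limit φ₀ of (φ_n) lies in Γ, and lim inf inf_{Γ_n} V_n ≥ inf_Γ S; combined with inf_Γ V_n → inf_Γ S, one gets inf_{Γ_n} V_n → inf_Γ S whenever inf_{Γ_n} V_n ≤ inf_Γ V_n. -/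
open Filter Topology

/-!
On a compact space a lower semicontinuous `S` that exceeds `c` on the minimum set of `U` already
exceeds `c` on a whole sublevel set `{U ≤ min U + t}`: otherwise `U` would attain its minimum on the
compact set `{S ≤ c}` at a value strictly above `min U`. Uniform convergence `V n → S` transports
this bound to `V n` on the shrinking sets `Γ n = {U ≤ min U + δ n}`, which gives the lower bound
for `⨅ Γ n, V n`; the matching upper bound comes from `Γ ⊆ Γ n` and pointwise convergence on `Γ`.
-/

theorem exists_pos_forall_sublevel_lt {X : Type*} [TopologicalSpace X] [CompactSpace X]
    {U S : X → ℝ} (hU : LowerSemicontinuous U) (hS : LowerSemicontinuous S) {m c : ℝ}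
    (hc : ∀ x, U x ≤ m → c < S x) : ∃ t > 0, ∀ x, U x ≤ m + t → c < S x := by
  rcases (S ⁻¹' Set.Iic c).eq_empty_or_nonempty with hK | hK
  · exact ⟨1, one_pos, fun x _ => not_le.1 fun hx => hK.subset hx⟩
  obtain ⟨x₀, hx₀, hmin⟩ :=
    LowerSemicontinuousOn.exists_isMinOn hK (hS.isClosed_preimage c).isCompact
      (hU.lowerSemicontinuousOn _)
  have hm : m < U x₀ := not_le.1 fun h => (hc x₀ h).not_ge hx₀
  refine ⟨(U x₀ - m) / 2, by linarith, fun x hx => not_le.1 fun hSx => ?_⟩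
  linarith [isMinOn_iff.1 hmin x hSx]

theorem TendstoUniformly.eventually_forall_sublevel_lt {X ι : Type*} [TopologicalSpace X]
    [CompactSpace X] {U S : X → ℝ} (hU : LowerSemicontinuous U) (hS : LowerSemicontinuous S)
    {m c b : ℝ} (hc : ∀ x, U x ≤ m → c ≤ S x) (hb : b < c) {l : Filter ι} {V : ι → X → ℝ}
    (hV : TendstoUniformly V S l) {δ : ι → ℝ} (hδ : Tendsto δ l (𝓝 0)) :
    ∀ᶠ n in l, ∀ x, U x ≤ m + δ n → b < V n x := by
  obtain ⟨b', hbb', hb'c⟩ := exists_between hb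
  obtain ⟨t, ht, hSt⟩ :=
    exists_pos_forall_sublevel_lt hU hS fun x hx => hb'c.trans_le (hc x hx)
  filter_upwards [hδ.eventually (gt_mem_nhds ht),
    Metric.tendstoUniformly_iff.1 hV _ (sub_pos.2 hbb')] with n hδn hVn x hx
  have hSx := hSt x (by linarith)
  have hVx := hVn x
  rw [Real.dist_eq, abs_lt] at hVx
  linarith

theorem tendstoUniformly_of_tendsto_iSup_abs_sub {X ι : Type*} {l : Filter ι}
    {V : ι → X → ℝ} {S : X → ℝ} (hbdd : ∀ n, BddAbove (Set.range fun x => |V n x - S x|))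
    (hV : Tendsto (fun n => ⨆ x, |V n x - S x|) l (𝓝 0)) : TendstoUniformly V S l := by
  refine Metric.tendstoUniformly_iff.2 fun ε hε => ?_
  filter_upwards [hV.eventually (gt_mem_nhds hε)] with n hn x
  rw [dist_comm, Real.dist_eq]
  exact (le_ciSup (hbdd n) x).trans_lt hn

theorem eventually_ciInf_lt_of_tendsto {ι α : Type*} [Nonempty ι] {l : Filter α}
    {f : α → ι → ℝ} {g : ι → ℝ} (hf : ∀ n, BddBelow (Set.range (f n)))
    (hfg : ∀ i, Tendsto (fun n => f n i) l (𝓝 (g i))) {b : ℝ} (hb : ⨅ i, g i < b) :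
    ∀ᶠ n in l, ⨅ i, f n i < b := by
  obtain ⟨i, hi⟩ := exists_lt_of_ciInf_lt hb
  filter_upwards [(hfg i).eventually (gt_mem_nhds hi)] with n hn
  exact (ciInf_le (hf n) i).trans_lt hn

theorem stmt_18_general {G : Type*} [MetricSpace G] [CompactSpace G]
    (U S : G → ℝ) (hU : Continuous U) (hS : Continuous S)
    (V : ℕ → G → ℝ) (hVcont : ∀ n, Continuous (V n))
    (hV : Tendsto (fun n => ⨆ φ : G, |V n φ - S φ|) atTop (nhds 0))
    (δ : ℕ → ℝ) (hδ0 : ∀ n, 0 ≤ δ n) (hδ : Tendsto δ atTop (nhds 0))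
    (φn : ℕ → G)
    (hφnΓn : ∀ n, U (φn n) ≤ (⨅ ψ : G, U ψ) + δ n) :
    (∀ (φ₀ : G) (ρ : ℕ → ℕ), StrictMono ρ →
      Tendsto (fun k => φn (ρ k)) atTop (nhds φ₀) → U φ₀ = ⨅ ψ : G, U ψ) ∧
    (⨅ φ : { φ : G // U φ = ⨅ ψ : G, U ψ }, S φ.1)
      ≤ liminf (fun n => ⨅ φ : { φ : G // U φ ≤ (⨅ ψ : G, U ψ) + δ n }, V n φ.1) atTop ∧
    ((∀ n, (⨅ φ : { φ : G // U φ ≤ (⨅ ψ : G, U ψ) + δ n }, V n φ.1)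
        ≤ ⨅ φ : { φ : G // U φ = ⨅ ψ : G, U ψ }, V n φ.1) →
      Tendsto (fun n => ⨅ φ : { φ : G // U φ ≤ (⨅ ψ : G, U ψ) + δ n }, V n φ.1)
        atTop (nhds (⨅ φ : { φ : G // U φ = ⨅ ψ : G, U ψ }, S φ.1))) := by
  have : Nonempty G := ⟨φn 0⟩
  set m := ⨅ ψ : G, U ψ
  obtain ⟨ψ₀, hψ₀⟩ : ∃ ψ₀, U ψ₀ = m := (isCompact_range hU).sInf_mem (Set.range_nonempty U)
  have hmU : ∀ φ, m ≤ U φ := ciInf_le (isCompact_range hU).bddBelow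
  have hbdd : ∀ f : G → ℝ, Continuous f → ∀ p : G → Prop,
      BddBelow (Set.range fun φ : { φ // p φ } => f φ.1) := fun f hf _ =>
    (isCompact_range hf).bddBelow.mono (Set.range_comp_subset_range _ _)
  have hVS : TendstoUniformly V S atTop := tendstoUniformly_of_tendsto_iSup_abs_sub
    (fun n => (isCompact_range ((hVcont n).sub hS).abs).bddAbove) hV
  have hcS : ∀ φ, U φ ≤ m → (⨅ φ : { φ // U φ = m }, S φ.1) ≤ S φ := fun φ hφ =>
    ciInf_le (hbdd S hS _) ⟨φ, hφ.antisymm (hmU φ)⟩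
  have hψ₀Γ : ∀ n, U ψ₀ ≤ m + δ n := fun n => by linarith [hδ0 n]
  have lower : ∀ b < ⨅ φ : { φ // U φ = m }, S φ.1,
      ∀ᶠ n in atTop, b ≤ ⨅ φ : { φ // U φ ≤ m + δ n }, V n φ.1 := fun b hb =>
    (hVS.eventually_forall_sublevel_lt hU.lowerSemicontinuous hS.lowerSemicontinuous hcS hb
      hδ).mono fun n hn =>
      have : Nonempty { φ // U φ ≤ m + δ n } := ⟨⟨ψ₀, hψ₀Γ n⟩⟩
      le_ciInf fun φ => (hn φ.1 φ.2).le
  refine ⟨fun φ₀ ρ hρ hlim => ?_, ?_, fun hcomp => ?_⟩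
  · refine le_antisymm (le_of_tendsto_of_tendsto ((hU.tendsto φ₀).comp hlim) ?_
      (Eventually.of_forall fun k => hφnΓn (ρ k))) (hmU φ₀)
    simpa using (hδ.comp hρ.tendsto_atTop).const_add m
  · have hcobdd : IsCoboundedUnder (· ≥ ·) atTop
        (fun n => ⨅ φ : { φ // U φ ≤ m + δ n }, V n φ.1) :=
      ((hVS.tendsto_at ψ₀).isBoundedUnder_le.mono_le (Eventually.of_forall fun n =>
        ciInf_le (hbdd _ (hVcont n) _) ⟨ψ₀, hψ₀Γ n⟩)).isCoboundedUnder_ge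
    exact le_of_forall_lt_imp_le_of_dense fun b hb => le_liminf_of_le hcobdd (lower b hb)
  · have : Nonempty { φ // U φ = m } := ⟨⟨ψ₀, hψ₀⟩⟩
    refine tendsto_order.2 ⟨fun b hb => ?_, fun b hb => ?_⟩
    · obtain ⟨b', hbb', hb'c⟩ := exists_between hb
      exact (lower b' hb'c).mono fun n hn => hbb'.trans_le hn
    · exact (eventually_ciInf_lt_of_tendsto (fun n => hbdd _ (hVcont n) _)
        (fun φ => hVS.tendsto_at φ.1) hb).mono fun n hn => (hcomp n).trans_lt hn

theorem stmt_18 {G : Type*} [MetricSpace G] [CompactSpace G] [Nonempty G]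
    (U S : G → ℝ) (hU : Continuous U) (hS : Continuous S)
    (V : ℕ → G → ℝ) (hVcont : ∀ n, Continuous (V n))
    (hV : Tendsto (fun n => ⨆ φ : G, |V n φ - S φ|) atTop (nhds 0))
    (δ : ℕ → ℝ) (hδ0 : ∀ n, 0 ≤ δ n) (hδ : Tendsto δ atTop (nhds 0))
    (φn : ℕ → G)
    (hφnΓn : ∀ n, U (φn n) ≤ (⨅ ψ : G, U ψ) + δ n)
    (hφnmin : ∀ n, V n (φn n)
      ≤ (⨅ φ : { φ : G // U φ ≤ (⨅ ψ : G, U ψ) + δ n }, V n φ.1) + 1 / (n + 1)) :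
    (∀ (φ₀ : G) (ρ : ℕ → ℕ), StrictMono ρ →
      Tendsto (fun k => φn (ρ k)) atTop (nhds φ₀) → U φ₀ = ⨅ ψ : G, U ψ) ∧
    (⨅ φ : { φ : G // U φ = ⨅ ψ : G, U ψ }, S φ.1)
      ≤ liminf (fun n => ⨅ φ : { φ : G // U φ ≤ (⨅ ψ : G, U ψ) + δ n }, V n φ.1) atTop ∧
    ((∀ n, (⨅ φ : { φ : G // U φ ≤ (⨅ ψ : G, U ψ) + δ n }, V n φ.1)
        ≤ ⨅ φ : { φ : G // U φ = ⨅ ψ : G, U ψ }, V n φ.1) →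
      Tendsto (fun n => ⨅ φ : { φ : G // U φ ≤ (⨅ ψ : G, U ψ) + δ n }, V n φ.1)
        atTop (nhds (⨅ φ : { φ : G // U φ = ⨅ ψ : G, U ψ }, S φ.1))) :=
  stmt_18_general U S hU hS V hVcont hV δ hδ0 hδ φn hφnΓn
end
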